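/- arXiv:1812.07559 — 5 statements merged into one kernel-verified Lean document; each statement's English description precedes it below -/
import Mathlib

section
/- Let G and H be groups acting compatibly on each other. Then η(G,H) decomposes as an iterated internal semidirect product: η(G,H) = ([G,H^φ] ⋊ G) ⋊ H^φ, i.e., [G,H^φ] is normal in [G,H^φ]·G, the product [G,H^φ]·G is normal in η(G,H), and η(G,H) = [G,H^φ]·G·H^φ with [G,H^φ]·G ∩ H^φ = 1 and [G,H^φ] ∩ G = 1 inside [G,H^φ]·G. -/
open Monoid
open scoped commutatorElement

/-- A pair of compatible (right) actions of groups `G` and `H` on each other,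
in the sense of Brown–Loday.  `aGH g h` denotes `g ^ h` and `aHG h g` denotes `h ^ g`. -/
structure CompatibleActions (G H : Type*) [Group G] [Group H] where
  aGH : G → H → G
  aHG : H → G → H
  aGH_one : ∀ g, aGH g 1 = g
  aGH_mul : ∀ g h₁ h₂, aGH g (h₁ * h₂) = aGH (aGH g h₁) h₂
  aGH_hom : ∀ g₁ g₂ h, aGH (g₁ * g₂) h = aGH g₁ h * aGH g₂ h
  aHG_one : ∀ h, aHG h 1 = h
  aHG_mul : ∀ h g₁ g₂, aHG h (g₁ * g₂) = aHG (aHG h g₁) g₂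
  aHG_hom : ∀ h₁ h₂ g, aHG (h₁ * h₂) g = aHG h₁ g * aHG h₂ g
  compat₁ : ∀ g g₁ h, aGH g (aHG h g₁) = g₁⁻¹ * aGH (g₁ * g * g₁⁻¹) h * g₁
  compat₂ : ∀ h h₁ g, aHG h (aGH g h₁) = h₁⁻¹ * aHG (h₁ * h * h₁⁻¹) g * h₁

variable {G H : Type*} [Group G] [Group H]

/-- Relators of the group `η(G,H)`:
`[g,h^φ]^{g₁} = [g^{g₁}, (h^{g₁})^φ]` and `[g,h^φ]^{h₁^φ} = [g^{h₁}, (h^{h₁})^φ]`. -/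
def etaRels (c : CompatibleActions G H) : Set (Coprod G H) :=
  let iG : G →* Coprod G H := Coprod.inl
  let iH : H →* Coprod G H := Coprod.inr
  (Set.range fun p : G × G × H =>
    ((iG p.1)⁻¹ * ⁅iG p.2.1, iH p.2.2⁆ * iG p.1) *
      ⁅iG (p.1⁻¹ * p.2.1 * p.1), iH (c.aHG p.2.2 p.1)⁆⁻¹) ∪
  (Set.range fun p : H × G × H =>
    ((iH p.1)⁻¹ * ⁅iG p.2.1, iH p.2.2⁆ * iH p.1) *
      ⁅iG (c.aGH p.2.1 p.1), iH (p.1⁻¹ * p.2.2 * p.1)⁆⁻¹)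

/-- The Brown–Loday group `η(G,H)`. -/
def EtaGroup (c : CompatibleActions G H) : Type _ :=
  Coprod G H ⧸ Subgroup.normalClosure (etaRels c)

instance (c : CompatibleActions G H) : Group (EtaGroup c) :=
  QuotientGroup.Quotient.group _

/-- The canonical map `G → η(G,H)`. -/
def etaG (c : CompatibleActions G H) : G →* EtaGroup c :=
  (QuotientGroup.mk' _).comp Coprod.inl

/-- The canonical map `H → η(G,H)`, `h ↦ h^φ`. -/
def etaH (c : CompatibleActions G H) : H →* EtaGroup c :=
  (QuotientGroup.mk' _).comp Coprod.inr

/-- The set of tensors `T⊗(G,H) = {[g, h^φ]} ⊆ η(G,H)`. -/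
def tensorSet (c : CompatibleActions G H) : Set (EtaGroup c) :=
  {x | ∃ g h, x = ⁅etaG c g, etaH c h⁆}

/-- The non-abelian tensor product `[G, H^φ] ≤ η(G,H)`. -/
def tensorSub (c : CompatibleActions G H) : Subgroup (EtaGroup c) :=
  Subgroup.closure (tensorSet c)

/-- The compatible pair of conjugation actions of `G` on itself, giving `ν(G) = η(G,G)`. -/
def conjActions (G : Type*) [Group G] : CompatibleActions G G where
  aGH g h := h⁻¹ * g * h
  aHG h g := g⁻¹ * h * g
  aGH_one := by intro g; group
  aGH_mul := by intros; group
  aGH_hom := by intros; group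
  aHG_one := by intro h; group
  aHG_mul := by intros; group
  aHG_hom := by intros; group
  compat₁ := by intros; group
  compat₂ := by intros; group

/-- `ν(G)`. -/
abbrev NuGroup (G : Type*) [Group G] := EtaGroup (conjActions G)

/-- A group is locally finite if all its finitely generated subgroups are finite. -/
def IsLocallyFiniteGroup (K : Type*) [Group K] : Prop :=
  ∀ S : Subgroup K, S.FG → Finite S

/-! The relators of `η(G,H)` say that conjugation by `g₁` and by `h₁^φ` maps a tensor
`[g, h^φ]` to another tensor, so `[G, H^φ]` is normal; since
`(h^φ)⁻¹ g h^φ = g [g⁻¹, (h⁻¹)^φ]`, so is `[G, H^φ]·G`. The map `η(G,H) → G × H` induced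
by the two inclusions kills every tensor and is injective on `G` and on `H^φ`, which makes
both intersections trivial. -/

theorem MonoidHom.range_le_normalizer_closure {K M : Type*} [Group K] [Group M] {f : M →* K}
    {S : Set K} (h : ∀ m, ∀ s ∈ S, (f m)⁻¹ * s * f m ∈ Subgroup.closure S) :
    f.range ≤ Subgroup.normalizer (Subgroup.closure S : Set K) := by
  rw [Subgroup.le_normalizer_closure_iff]
  rintro _ ⟨m, rfl⟩ s hs
  simpa using h m⁻¹ s hs

theorem Subgroup.inf_range_eq_bot_of_le_ker {K L M : Type*} [Group K] [Group L] [Group M]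
    {A : Subgroup K} {f : K →* L} {i : M →* K} (hA : A ≤ f.ker)
    (hi : Function.Injective (f.comp i)) : A ⊓ i.range = ⊥ := by
  rw [eq_bot_iff]
  rintro _ ⟨hmA, m, rfl⟩
  have hm : f.comp i m = f.comp i 1 := by simpa using hA hmA
  simp [hi hm]

theorem Prod.commutatorElement_mk_one_one_mk {M N : Type*} [Group M] [Group N] (m : M) (n : N) :
    ⁅(m, (1 : N)), ((1 : M), n)⁆ = 1 := by
  simp [commutatorElement_def]

namespace EtaGroup

variable (c : CompatibleActions G H)

theorem conj_etaG_commutator (g₁ g : G) (h : H) :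
    (etaG c g₁)⁻¹ * ⁅etaG c g, etaH c h⁆ * etaG c g₁ =
      ⁅etaG c (g₁⁻¹ * g * g₁), etaH c (c.aHG h g₁)⁆ :=
  QuotientGroup.eq_iff_div_mem.2 (Subgroup.subset_normalClosure (Or.inl ⟨(g₁, g, h), rfl⟩))

theorem conj_etaH_commutator (h₁ : H) (g : G) (h : H) :
    (etaH c h₁)⁻¹ * ⁅etaG c g, etaH c h⁆ * etaH c h₁ =
      ⁅etaG c (c.aGH g h₁), etaH c (h₁⁻¹ * h * h₁)⁆ :=
  QuotientGroup.eq_iff_div_mem.2 (Subgroup.subset_normalClosure (Or.inr ⟨(h₁, g, h), rfl⟩))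

theorem conj_etaH_etaG (h : H) (g : G) :
    (etaH c h)⁻¹ * etaG c g * etaH c h = etaG c g * ⁅etaG c g⁻¹, etaH c h⁻¹⁆ := by
  simp only [commutatorElement_def, map_inv]
  group

theorem range_etaG_sup_range_etaH : (etaG c).range ⊔ (etaH c).range = ⊤ := by
  have := congrArg (Subgroup.map (QuotientGroup.mk' (Subgroup.normalClosure (etaRels c))))
    (Coprod.range_inl_sup_range_inr (G := G) (H := H))
  rwa [Subgroup.map_sup, MonoidHom.map_range, MonoidHom.map_range,
    Subgroup.map_top_of_surjective _ (QuotientGroup.mk'_surjective _)] at this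

theorem closure_normal {S : Set (EtaGroup c)}
    (hG : ∀ g, ∀ s ∈ S, (etaG c g)⁻¹ * s * etaG c g ∈ Subgroup.closure S)
    (hH : ∀ h, ∀ s ∈ S, (etaH c h)⁻¹ * s * etaH c h ∈ Subgroup.closure S) :
    (Subgroup.closure S).Normal := by
  rw [← Subgroup.normalizer_eq_top_iff, eq_top_iff, ← range_etaG_sup_range_etaH]
  exact sup_le (MonoidHom.range_le_normalizer_closure hG) (MonoidHom.range_le_normalizer_closure hH)

theorem tensorSub_normal : (tensorSub c).Normal := by
  refine closure_normal c ?_ ?_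
  · rintro g₁ _ ⟨g, h, rfl⟩
    rw [conj_etaG_commutator]
    exact Subgroup.subset_closure ⟨_, _, rfl⟩
  · rintro h₁ _ ⟨g, h, rfl⟩
    rw [conj_etaH_commutator]
    exact Subgroup.subset_closure ⟨_, _, rfl⟩

theorem tensorSub_sup_range_etaG_normal : (tensorSub c ⊔ (etaG c).range).Normal := by
  rw [tensorSub, ← Subgroup.closure_eq (etaG c).range, ← Subgroup.closure_union,
    MonoidHom.coe_range]
  have tensor_mem (g : G) (h : H) :
      ⁅etaG c g, etaH c h⁆ ∈ Subgroup.closure (tensorSet c ∪ Set.range (etaG c)) :=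
    Subgroup.subset_closure (Or.inl ⟨g, h, rfl⟩)
  have etaG_mem (g : G) : etaG c g ∈ Subgroup.closure (tensorSet c ∪ Set.range (etaG c)) :=
    Subgroup.subset_closure (Or.inr ⟨g, rfl⟩)
  refine closure_normal c ?_ ?_
  · rintro g₁ _ (⟨g, h, rfl⟩ | ⟨g, rfl⟩)
    · rw [conj_etaG_commutator]
      exact tensor_mem _ _
    · simpa [map_mul] using etaG_mem (g₁⁻¹ * g * g₁)
  · rintro h₁ _ (⟨g, h, rfl⟩ | ⟨g, rfl⟩)
    · rw [conj_etaH_commutator]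
      exact tensor_mem _ _
    · rw [conj_etaH_etaG]
      exact mul_mem (etaG_mem g) (tensor_mem _ _)

def proj : EtaGroup c →* G × H :=
  QuotientGroup.lift _ (Coprod.lift (MonoidHom.inl G H) (MonoidHom.inr G H)) <| by
    refine Subgroup.normalClosure_le_normal ?_
    rintro _ (⟨⟨g₁, g, h⟩, rfl⟩ | ⟨⟨h₁, g, h⟩, rfl⟩) <;>
      simp [map_commutatorElement, Prod.commutatorElement_mk_one_one_mk, -commutatorElement_inv]

theorem proj_comp_etaG : (proj c).comp (etaG c) = MonoidHom.inl G H := rfl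

theorem proj_comp_etaH : (proj c).comp (etaH c) = MonoidHom.inr G H := rfl

theorem tensorSub_le_ker_proj : tensorSub c ≤ (proj c).ker := by
  rw [tensorSub, Subgroup.closure_le]
  rintro _ ⟨g, h, rfl⟩
  rw [SetLike.mem_coe, MonoidHom.mem_ker, map_commutatorElement]
  exact Prod.commutatorElement_mk_one_one_mk g h

theorem tensorSub_sup_range_etaG_le_ker_snd_comp_proj :
    tensorSub c ⊔ (etaG c).range ≤ ((MonoidHom.snd G H).comp (proj c)).ker := by
  refine sup_le ((tensorSub_le_ker_proj c).trans fun x hx => ?_) ?_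
  · simp [MonoidHom.mem_ker.1 hx]
  · rw [MonoidHom.range_le_ker_iff, MonoidHom.comp_assoc, proj_comp_etaG, MonoidHom.snd_comp_inl]

end EtaGroup

/-- The decomposition `η(G,H) = ([G,H^φ] ⋊ G) ⋊ H^φ` as iterated internal semidirect
products. -/
theorem eta_decomposition {G H : Type*} [Group G] [Group H] (c : CompatibleActions G H) :
    ((tensorSub c).subgroupOf (tensorSub c ⊔ (etaG c).range)).Normal ∧
    (tensorSub c ⊔ (etaG c).range).Normal ∧
    tensorSub c ⊔ (etaG c).range ⊔ (etaH c).range = ⊤ ∧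
    (tensorSub c ⊔ (etaG c).range) ⊓ (etaH c).range = ⊥ ∧
    tensorSub c ⊓ (etaG c).range = ⊥ := by
  refine ⟨(EtaGroup.tensorSub_normal c).subgroupOf _, EtaGroup.tensorSub_sup_range_etaG_normal c,
    ?_, ?_, ?_⟩
  · rw [eq_top_iff, ← EtaGroup.range_etaG_sup_range_etaH, sup_assoc]
    exact le_sup_right
  · refine Subgroup.inf_range_eq_bot_of_le_ker
      (EtaGroup.tensorSub_sup_range_etaG_le_ker_snd_comp_proj c) ?_
    rw [MonoidHom.comp_assoc, EtaGroup.proj_comp_etaH, MonoidHom.snd_comp_inr]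
    exact Function.injective_id
  · refine Subgroup.inf_range_eq_bot_of_le_ker (EtaGroup.tensorSub_le_ker_proj c) ?_
    rw [EtaGroup.proj_comp_etaG]
    exact Prod.mk_left_injective 1
end

section
/- Let G be a finitely generated group. If the non-abelian tensor square [G,G^φ] (the subgroup of ν(G) generated by all elements [g,h^φ] with g,h ∈ G) is locally finite, then G is finite. -/
open Monoid
open scoped commutatorElement

variable {G H : Type*} [Group G] [Group H]

section EtaLift

variable {G H K : Type*} [Group G] [Group H] [Group K]

/-- Lift a pair of homomorphisms killing the relators to `η(G,H)`. -/
def etaLift (c : CompatibleActions G H) (f : G →* K) (g : H →* K)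
    (hrel : ∀ r ∈ etaRels c, Coprod.lift f g r = 1) : EtaGroup c →* K :=
  QuotientGroup.lift _ (Coprod.lift f g) (fun x hx => by
    have : Subgroup.normalClosure (etaRels c) ≤ (Coprod.lift f g).ker :=
      Subgroup.normalClosure_le_normal (fun r hr => MonoidHom.mem_ker.mpr (hrel r hr))
    exact MonoidHom.mem_ker.mp (this hx))

@[simp] lemma etaLift_etaG (c : CompatibleActions G H) (f : G →* K) (g : H →* K)
    (hrel : ∀ r ∈ etaRels c, Coprod.lift f g r = 1) (x : G) :
    etaLift c f g hrel (etaG c x) = f x := by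
  rfl

@[simp] lemma etaLift_etaH (c : CompatibleActions G H) (f : G →* K) (g : H →* K)
    (hrel : ∀ r ∈ etaRels c, Coprod.lift f g r = 1) (x : H) :
    etaLift c f g hrel (etaH c x) = g x := by
  rfl

end EtaLift
section Kappa

variable (G : Type*) [Group G]

/-- The commutator map `κ : ν(G) → G`, identity on both copies of `G`. -/
def nuKappa : NuGroup G →* G :=
  etaLift (conjActions G) (MonoidHom.id G) (MonoidHom.id G) (by
    intro r hr
    simp only [etaRels, Set.mem_union, Set.mem_range] at hr
    obtain ⟨p, rfl⟩ | ⟨p, rfl⟩ := hr <;>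
    · simp only [conjActions, commutatorElement_def, map_mul, map_inv,
        Coprod.lift_apply_inl, Coprod.lift_apply_inr, MonoidHom.id_apply]
      group)

variable {G}

@[simp] lemma nuKappa_etaG (x : G) : nuKappa G (etaG (conjActions G) x) = x := by
  simp [nuKappa]

@[simp] lemma nuKappa_etaH (x : G) : nuKappa G (etaH (conjActions G) x) = x := by
  simp [nuKappa]

end Kappa

section Heis

/-- The integral Heisenberg group. -/
@[ext] structure Heis where
  a : ℤ
  b : ℤ
  t : ℤ

namespace Heis

instance : Mul Heis := ⟨fun x y => ⟨x.a + y.a, x.b + y.b, x.t + y.t + x.a * y.b⟩⟩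
instance : One Heis := ⟨⟨0, 0, 0⟩⟩
instance : Inv Heis := ⟨fun x => ⟨-x.a, -x.b, -x.t + x.a * x.b⟩⟩

@[simp] lemma mul_a (x y : Heis) : (x * y).a = x.a + y.a := rfl
@[simp] lemma mul_b (x y : Heis) : (x * y).b = x.b + y.b := rfl
@[simp] lemma mul_t (x y : Heis) : (x * y).t = x.t + y.t + x.a * y.b := rfl
@[simp] lemma one_a : (1 : Heis).a = 0 := rfl
@[simp] lemma one_b : (1 : Heis).b = 0 := rfl
@[simp] lemma one_t : (1 : Heis).t = 0 := rfl
@[simp] lemma inv_a (x : Heis) : x⁻¹.a = -x.a := rfl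
@[simp] lemma inv_b (x : Heis) : x⁻¹.b = -x.b := rfl
@[simp] lemma inv_t (x : Heis) : x⁻¹.t = -x.t + x.a * x.b := rfl

instance : Group Heis where
  mul_assoc x y z := by ext <;> simp <;> ring
  one_mul x := by ext <;> simp
  mul_one x := by ext <;> simp
  inv_mul_cancel x := by ext <;> simp <;> ring

lemma central_pow (t : ℤ) (n : ℕ) : (⟨0, 0, t⟩ : Heis) ^ n = ⟨0, 0, n * t⟩ := by
  induction n with
  | zero => ext <;> simp
  | succ n ih => rw [pow_succ, ih]; ext <;> simp <;> push_cast <;> ring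

end Heis

end Heis
section KeyLemma

variable {G : Type*} [Group G]

/-- If the `x ⊗ x` tensor has finite order in `ν(G)`, then every additive
`ℤ`-valued function on `G` vanishes at `x`. -/
lemma key_vanish (p : G → ℤ) (hp : ∀ a b, p (a * b) = p a + p b) (x : G)
    (hord : ∃ n, 0 < n ∧ ⁅etaG (conjActions G) x, etaH (conjActions G) x⁆ ^ n = 1) :
    p x = 0 := by
  have p1 : p 1 = 0 := by have := hp 1 1; simp at this; omega
  have pinv : ∀ a : G, p a⁻¹ = -p a := by
    intro a; have := hp a⁻¹ a; simp [p1] at this; omega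
  have pconj : ∀ c a : G, p (c⁻¹ * a * c) = p a := by
    intro c a; rw [hp, hp, pinv]; ring
  set f : G →* Heis := MonoidHom.mk' (fun a => ⟨p a, 0, 0⟩)
      (fun a b => by ext <;> simp [hp]) with hf
  set g : G →* Heis := MonoidHom.mk' (fun a => ⟨0, p a, 0⟩)
      (fun a b => by ext <;> simp [hp]) with hg
  have hrel : ∀ r ∈ etaRels (conjActions G), Coprod.lift f g r = 1 := by
    intro r hr
    simp only [etaRels, Set.mem_union, Set.mem_range] at hr
    obtain ⟨q, rfl⟩ | ⟨q, rfl⟩ := hr <;>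
    · simp only [conjActions, commutatorElement_def, map_mul, map_inv,
        Coprod.lift_apply_inl, Coprod.lift_apply_inr, hf, hg, MonoidHom.mk'_apply,
        pconj]
      ext <;> simp [pconj, hp, pinv] <;> ring
  set θ : NuGroup G →* Heis := etaLift (conjActions G) f g hrel with hθ
  have hc : θ ⁅etaG (conjActions G) x, etaH (conjActions G) x⁆ = ⟨0, 0, p x * p x⟩ := by
    rw [map_commutatorElement]
    rw [hθ, etaLift_etaG, etaLift_etaH]
    simp only [hf, hg, MonoidHom.mk'_apply, commutatorElement_def]
    ext <;> simp <;> ring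
  obtain ⟨n, npos, hn⟩ := hord
  have h1 : (⟨0, 0, p x * p x⟩ : Heis) ^ n = 1 := by
    rw [← hc, ← map_pow, hn, map_one]
  rw [Heis.central_pow] at h1
  have h2 : (n : ℤ) * (p x * p x) = 0 := congrArg Heis.t h1
  have hn0 : (n : ℤ) ≠ 0 := Int.natCast_ne_zero.mpr npos.ne'
  have := mul_eq_zero.mp h2
  rcases this with h | h
  · exact absurd h hn0
  · exact mul_self_eq_zero.mp h

end KeyLemma
section FiniteOfImage

/-- A finitely generated group that is the surjective image of a locally finite
group is finite. -/
lemma finite_of_surjective_of_locallyFinite {K Q : Type*} [Group K] [Group Q]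
    (hl : IsLocallyFiniteGroup K) (f : K →* Q) (hf : Function.Surjective f)
    (hq : Group.FG Q) : Finite Q := by
  classical
  obtain ⟨T, hT, hTfin⟩ := Group.fg_iff.mp hq
  choose g hg using hf
  have hSfg : (Subgroup.closure (g '' T)).FG :=
    (Subgroup.fg_iff _).mpr ⟨g '' T, rfl, hTfin.image g⟩
  have hfin : Finite ↥(Subgroup.closure (g '' T)) := hl _ hSfg
  have hmap : (Subgroup.closure (g '' T)).map f = ⊤ := by
    rw [MonoidHom.map_closure]
    refine top_unique ?_
    rw [← hT]
    refine Subgroup.closure_mono ?_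
    intro t ht
    exact ⟨g t, Set.mem_image_of_mem g ht, hg t⟩
  refine Finite.of_surjective (fun s : ↥(Subgroup.closure (g '' T)) => f s) ?_
  intro q
  have hq' : q ∈ (Subgroup.closure (g '' T)).map f := hmap ▸ Subgroup.mem_top q
  obtain ⟨s, hs, rfl⟩ := hq'
  exact ⟨⟨s, hs⟩, rfl⟩

end FiniteOfImage
/-- If `G` is finitely generated and the non-abelian tensor square `[G,G^φ] ≤ ν(G)` is
locally finite, then `G` is finite. -/
theorem finite_of_tensorSquare_locallyFinite {G : Type*} [Group G] [Group.FG G]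
    (h : IsLocallyFiniteGroup (tensorSub (conjActions G))) : Finite G := by
  classical
  -- Step 1: every diagonal tensor has finite order.
  have hord : ∀ x : G, ∃ n, 0 < n ∧
      ⁅etaG (conjActions G) x, etaH (conjActions G) x⁆ ^ n = 1 := by
    intro x
    set c := ⁅etaG (conjActions G) x, etaH (conjActions G) x⁆ with hcdef
    have hmem : c ∈ tensorSub (conjActions G) := Subgroup.subset_closure ⟨x, x, rfl⟩
    set y : ↥(tensorSub (conjActions G)) := ⟨c, hmem⟩ with hy
    have hS : (Subgroup.closure {y}).FG :=
      (Subgroup.fg_iff _).mpr ⟨{y}, rfl, Set.finite_singleton y⟩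
    have : Finite ↥(Subgroup.closure {y}) := h _ hS
    have hfy : IsOfFinOrder (⟨y, Subgroup.subset_closure rfl⟩ : ↥(Subgroup.closure {y})) :=
      isOfFinOrder_of_finite _
    obtain ⟨n, npos, hn⟩ := isOfFinOrder_iff_pow_eq_one.mp hfy
    refine ⟨n, npos, ?_⟩
    have h1 : y ^ n = 1 := congrArg Subtype.val hn
    have h2 : c ^ n = 1 := congrArg Subtype.val h1
    exact h2
  -- Step 2: every additive `ℤ`-valued map vanishes.
  have hzero : ∀ p : G → ℤ, (∀ a b, p (a * b) = p a + p b) → ∀ x, p x = 0 :=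
    fun p hp x => key_vanish p hp x (hord x)
  -- Step 3: the abelianization is a torsion group.
  have hfgAb : Group.FG (Abelianization G) :=
    Group.fg_of_surjective (f := Abelianization.of) fun b =>
      Quotient.inductionOn' b fun a => ⟨a, rfl⟩
  have htor : Monoid.IsTorsion (Abelianization G) := by
    intro xbar
    haveI : AddGroup.FG (Additive (Abelianization G)) := by
      exact GroupFG.iff_add_fg.mp hfgAb
    haveI : Module.Finite ℤ (Additive (Abelianization G)) :=
      Module.Finite.iff_addGroup_fg.mpr ‹_›
    set M := Additive (Abelianization G)
    set tor := Submodule.torsion ℤ M with htordef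
    haveI : Module.Free ℤ (M ⧸ tor) := Module.free_of_finite_type_torsion_free'
    have hq0 : ∀ q : M ⧸ tor, q = 0 := by
      set B := Module.Free.chooseBasis ℤ (M ⧸ tor) with hB
      intro q
      obtain ⟨m, rfl⟩ := Submodule.mkQ_surjective tor q
      have hcoord : ∀ i, B.repr (tor.mkQ m) i = 0 := by
        intro i
        obtain ⟨x, hx0⟩ := QuotientGroup.mk_surjective (s := commutator G) (Additive.toMul m)
        have hx : Additive.ofMul (Abelianization.of x) = m := congrArg Additive.ofMul hx0
        have := hzero
          (fun y => B.repr (tor.mkQ (Additive.ofMul (Abelianization.of y))) i)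
          (fun a b => by
            rw [map_mul]
            have : Additive.ofMul (Abelianization.of a * Abelianization.of b)
                = Additive.ofMul (Abelianization.of a) + Additive.ofMul (Abelianization.of b) := rfl
            rw [this, map_add, map_add, Finsupp.add_apply]) x
        rwa [hx] at this
      have hrepr : B.repr (tor.mkQ m) = 0 := Finsupp.ext fun i => hcoord i
      have := B.repr.map_eq_zero_iff.mp hrepr
      exact this
    have hmem : Additive.ofMul xbar ∈ tor := by
      have := hq0 (tor.mkQ (Additive.ofMul xbar))
      rwa [Submodule.mkQ_apply, Submodule.Quotient.mk_eq_zero] at this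
    obtain ⟨⟨n, hn⟩, hnx⟩ := hmem
    have : IsOfFinAddOrder (Additive.ofMul xbar) :=
      isOfFinAddOrder_iff_zsmul_eq_zero.mpr
        ⟨n, mem_nonZeroDivisors_iff_ne_zero.mp hn, hnx⟩
    exact isOfFinAddOrder_ofMul_iff.mp this
  haveI : Group.FG (Abelianization G) := hfgAb
  have hAbFin : Finite (Abelianization G) := CommGroup.finite_of_fg_torsion (Abelianization G) htor
  -- Step 4: the commutator subgroup is finite.
  haveI : Finite (G ⧸ commutator G) := hAbFin
  haveI : (commutator G).FiniteIndex := Subgroup.finiteIndex_of_finite_quotient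
  haveI hFGcomm : Group.FG ↥(commutator G) := inferInstance
  set κ' : ↥(tensorSub (conjActions G)) →* G :=
    (nuKappa G).comp (tensorSub (conjActions G)).subtype with hκ'
  have hrange : κ'.range = commutator G := by
    rw [hκ', MonoidHom.range_comp, Subgroup.range_subtype]
    show (tensorSub (conjActions G)).map (nuKappa G) = commutator G
    rw [tensorSub, MonoidHom.map_closure, commutator_eq_closure]
    congr 1
    ext z
    constructor
    · rintro ⟨w, ⟨g, hgen, rfl⟩, rfl⟩
      exact ⟨g, hgen, by simp [map_commutatorElement]⟩
    · rintro ⟨g, hgen, rfl⟩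
      exact ⟨⁅etaG (conjActions G) g, etaH (conjActions G) hgen⁆, ⟨g, hgen, rfl⟩,
        by simp [map_commutatorElement]⟩
  have hfin : Finite ↥κ'.range := by
    refine finite_of_surjective_of_locallyFinite h κ'.rangeRestrict
      κ'.rangeRestrict_surjective ?_
    rw [hrange]; exact hFGcomm
  rw [hrange] at hfin
  exact Finite.of_equiv _ (Subgroup.groupEquivQuotientProdSubgroup (s := commutator G)).symm
end

section
/- Let G be a finitely generated group. Suppose the derived subgroup G' is locally finite and the subgroup Δ̃(G) = ⟨[g,h^φ][h,g^φ] : g,h ∈ G⟩ of ν(G) is periodic (every element has finite order). Then G is finite. -/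
/-!
Sending `G` to the integer Heisenberg group along the two axes, `g ↦ (f g, 0, 0)` and
`g^φ ↦ (0, f g, 0)` for a homomorphism `f : G → ℤ`, respects the relations of `ν(G)`, and maps
`[g, g^φ]² ∈ Δ̃(G)` to the central element `2 (f g)²`. Periodicity of `Δ̃(G)` therefore kills
every homomorphism `G → ℤ`, so the finitely generated abelian group `G/G'` is finite. Then `G'`
has finite index, hence is finitely generated by Schreier's lemma, hence finite.
-/

open Monoid
open scoped commutatorElement

variable {G H : Type*} [Group G] [Group H]

/-- The subgroup `Δ̃(K) = ⟨[g,h^φ][h,g^φ] : g, h ∈ K⟩ ≤ ν(K)`. -/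
def deltaTilde (K : Type*) [Group K] : Subgroup (NuGroup K) :=
  Subgroup.closure {x | ∃ g h, x = ⁅etaG (conjActions K) g, etaH (conjActions K) h⁆ *
    ⁅etaG (conjActions K) h, etaH (conjActions K) g⁆}

namespace EtaGroup

variable {K : Type*} [Group K]

def lift (c : CompatibleActions G H) (α : G →* K) (β : H →* K)
    (hG : ∀ g₁ g h, (α g₁)⁻¹ * ⁅α g, β h⁆ * α g₁ = ⁅(α g₁)⁻¹ * α g * α g₁, β (c.aHG h g₁)⁆)
    (hH : ∀ h₁ g h, (β h₁)⁻¹ * ⁅α g, β h⁆ * β h₁ = ⁅α (c.aGH g h₁), (β h₁)⁻¹ * β h * β h₁⁆) :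
    EtaGroup c →* K :=
  QuotientGroup.lift _ (Coprod.lift α β) <| Subgroup.normalClosure_le_normal <| by
    rintro _ (⟨⟨g₁, g, h⟩, rfl⟩ | ⟨⟨h₁, g, h⟩, rfl⟩) <;>
    simp only [SetLike.mem_coe, MonoidHom.mem_ker, map_mul, map_inv, map_commutatorElement,
      Coprod.lift_apply_inl, Coprod.lift_apply_inr, mul_inv_eq_one]
    exacts [hG g₁ g h, hH h₁ g h]

variable (c : CompatibleActions G H) (α : G →* K) (β : H →* K) {hG hH}

@[simp]
theorem lift_etaG (g : G) : lift c α β hG hH (etaG c g) = α g := rfl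

@[simp]
theorem lift_etaH (h : H) : lift c α β hG hH (etaH c h) = β h := rfl

end EtaGroup

/-- The integer Heisenberg group: `⟨a, b, c⟩` is the matrix `[[1, a, c], [0, 1, b], [0, 0, 1]]`. -/
@[ext]
structure Heisenberg where
  a : ℤ
  b : ℤ
  c : ℤ

namespace Heisenberg

instance : Mul Heisenberg := ⟨fun x y ↦ ⟨x.a + y.a, x.b + y.b, x.c + y.c + x.a * y.b⟩⟩

instance : One Heisenberg := ⟨⟨0, 0, 0⟩⟩

instance : Inv Heisenberg := ⟨fun x ↦ ⟨-x.a, -x.b, -x.c + x.a * x.b⟩⟩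

@[simp]
theorem mul_def (x y : Heisenberg) : x * y = ⟨x.a + y.a, x.b + y.b, x.c + y.c + x.a * y.b⟩ := rfl

@[simp]
theorem one_def : (1 : Heisenberg) = ⟨0, 0, 0⟩ := rfl

@[simp]
theorem inv_def (x : Heisenberg) : x⁻¹ = ⟨-x.a, -x.b, -x.c + x.a * x.b⟩ := rfl

instance : Group Heisenberg where
  mul_assoc x y z := by ext <;> simp <;> ring
  one_mul x := by ext <;> simp
  mul_one x := by ext <;> simp
  inv_mul_cancel x := by ext <;> simp

def zHom : Multiplicative ℤ →* Heisenberg where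
  toFun s := ⟨0, 0, s.toAdd⟩
  map_one' := rfl
  map_mul' s t := by ext <;> simp

theorem zHom_injective : Function.Injective zHom :=
  fun _ _ h ↦ congrArg Heisenberg.c h

def xHom (f : G →* Multiplicative ℤ) : G →* Heisenberg where
  toFun g := ⟨(f g).toAdd, 0, 0⟩
  map_one' := by ext <;> simp
  map_mul' g h := by ext <;> simp

def yHom (f : G →* Multiplicative ℤ) : G →* Heisenberg where
  toFun g := ⟨0, (f g).toAdd, 0⟩
  map_one' := by ext <;> simp
  map_mul' g h := by ext <;> simp

theorem commutatorElement_xHom_yHom (f : G →* Multiplicative ℤ) (g h : G) :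
    ⁅xHom f g, yHom f h⁆ = zHom (.ofAdd ((f g).toAdd * (f h).toAdd)) := by
  ext <;> simp [commutatorElement_def, xHom, yHom, zHom, mul_comm]

end Heisenberg

open Heisenberg in
def nuToHeisenberg (f : G →* Multiplicative ℤ) : NuGroup G →* Heisenberg :=
  EtaGroup.lift _ (xHom f) (yHom f)
    (fun _ _ _ ↦ by ext <;> simp [conjActions, commutatorElement_def, xHom, yHom])
    (fun _ _ _ ↦ by ext <;> simp [conjActions, commutatorElement_def, xHom, yHom])

theorem MonoidHom.eq_one_of_deltaTilde_periodic (hΔ : ∀ x ∈ deltaTilde G, IsOfFinOrder x)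
    (f : G →* Multiplicative ℤ) : f = 1 := by
  ext g
  set t := (f g).toAdd
  set x := ⁅etaG (conjActions G) g, etaH (conjActions G) g⁆ *
    ⁅etaG (conjActions G) g, etaH (conjActions G) g⁆
  have hx : x ∈ deltaTilde G := Subgroup.subset_closure ⟨g, g, rfl⟩
  have himage : nuToHeisenberg f x = Heisenberg.zHom (.ofAdd (t * t + t * t)) := by
    simp only [x, nuToHeisenberg, map_mul, map_commutatorElement, EtaGroup.lift_etaG,
      EtaGroup.lift_etaH, Heisenberg.commutatorElement_xHom_yHom, ofAdd_add, t]
  have hfin : IsOfFinOrder (Multiplicative.ofAdd (t * t + t * t)) :=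
    Heisenberg.zHom_injective.isOfFinOrder_iff.mp <|
      himage ▸ (nuToHeisenberg f).isOfFinOrder (hΔ x hx)
  have ht : t = 0 := by
    by_contra hne
    exact not_isOfFinOrder_of_isMulTorsionFree (ofAdd_eq_one.not.mpr (by simpa using hne)) hfin
  exact toAdd_eq_zero.mp ht

theorem AddCommGroup.finite_of_fg_of_forall_addMonoidHom_int_eq_zero
    {M : Type*} [AddCommGroup M] [AddGroup.FG M] (h : ∀ f : M →+ ℤ, f = 0) : Finite M := by
  have : Module.Finite ℤ M := Module.Finite.iff_addGroup_fg.mpr ‹_›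
  refine Module.finite_of_fg_torsion M fun x ↦ ?_
  have hx : (Submodule.torsion ℤ M).mkQ x = 0 :=
    (Module.forall_dual_apply_eq_zero_iff ℤ _).mp fun φ ↦
      DFunLike.congr_fun (h (φ.comp (Submodule.torsion ℤ M).mkQ).toAddMonoidHom) x
  exact (Submodule.mem_torsion_iff x).mp ((Submodule.Quotient.mk_eq_zero _).mp hx)

theorem Abelianization.finite_of_forall_monoidHom_int_eq_one [Group.FG G]
    (h : ∀ f : G →* Multiplicative ℤ, f = 1) : Finite (Abelianization G) := by
  have : Group.FG (Abelianization G) := QuotientGroup.fg _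
  have : Finite (Additive (Abelianization G)) :=
    AddCommGroup.finite_of_fg_of_forall_addMonoidHom_int_eq_zero fun f ↦
      AddMonoidHom.toMultiplicativeRight.injective <|
        Abelianization.hom_ext _ _ <| (h _).trans (h _).symm
  exact this

theorem IsLocallyFiniteGroup.finite {K : Type*} [Group K] [Group.FG K]
    (h : IsLocallyFiniteGroup K) : Finite K :=
  have : Finite (⊤ : Subgroup K) := h ⊤ Group.FG.out
  Finite.of_equiv _ Subgroup.topEquiv.toEquiv

theorem finite_of_finite_abelianization [Group.FG G] [Finite (Abelianization G)]
    (h : IsLocallyFiniteGroup (commutator G)) : Finite G := by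
  have : Finite (G ⧸ commutator G) := ‹Finite (Abelianization G)›
  have : (commutator G).FiniteIndex := Subgroup.finiteIndex_of_finite_quotient
  have : Group.FG (commutator G) := Subgroup.fg_of_index_ne_zero _
  have : Finite (commutator G) := h.finite
  exact Finite.of_subgroup_quotient (commutator G)

/-- If `G` is finitely generated, `G'` is locally finite and `Δ̃(G)` is periodic,
then `G` is finite. -/
theorem finite_of_deltaTilde_periodic {G : Type*} [Group G] [Group.FG G]
    (h1 : IsLocallyFiniteGroup (commutator G))
    (h2 : ∀ x ∈ deltaTilde G, IsOfFinOrder x) : Finite G :=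
  have : Finite (Abelianization G) :=
    Abelianization.finite_of_forall_monoidHom_int_eq_one
      (MonoidHom.eq_one_of_deltaTilde_periodic h2)
  finite_of_finite_abelianization h1
end

section
/- Let G be a finitely generated group. Suppose the derived subgroup G' is locally finite and the diagonal subgroup Δ(G) = ⟨[g,g^φ] : g ∈ G⟩ ≤ ν(G) is periodic. Then G is finite. -/
open Monoid
open scoped commutatorElement

variable {G H : Type*} [Group G] [Group H]

/-- The diagonal subgroup `Δ(K) = ⟨[g, g^φ] : g ∈ K⟩ ≤ ν(K)`. -/
def deltaSub (K : Type*) [Group K] : Subgroup (NuGroup K) :=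
  Subgroup.closure {x | ∃ g, x = ⁅etaG (conjActions K) g, etaH (conjActions K) g⁆}


/-! ### Auxiliary: the discrete Heisenberg group -/

/-- Discrete Heisenberg group. -/
@[ext] structure Heis_s4 where
  ha : ℤ
  hb : ℤ
  hc : ℤ

namespace Heis_s4

instance inst_s4 : Mul Heis_s4 := ⟨fun x y => ⟨x.ha + y.ha, x.hb + y.hb, x.hc + y.hc + x.ha * y.hb⟩⟩
instance inst_s4_2 : One Heis_s4 := ⟨⟨0, 0, 0⟩⟩
instance inst_s4_3 : Inv Heis_s4 := ⟨fun x => ⟨-x.ha, -x.hb, x.ha * x.hb - x.hc⟩⟩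

@[simp] lemma mul_ha (x y : Heis_s4) : (x * y).ha = x.ha + y.ha := rfl
@[simp] lemma mul_hb (x y : Heis_s4) : (x * y).hb = x.hb + y.hb := rfl
@[simp] lemma mul_hc (x y : Heis_s4) : (x * y).hc = x.hc + y.hc + x.ha * y.hb := rfl
@[simp] lemma one_ha : (1 : Heis_s4).ha = 0 := rfl
@[simp] lemma one_hb : (1 : Heis_s4).hb = 0 := rfl
@[simp] lemma one_hc : (1 : Heis_s4).hc = 0 := rfl
@[simp] lemma inv_ha (x : Heis_s4) : x⁻¹.ha = -x.ha := rfl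
@[simp] lemma inv_hb (x : Heis_s4) : x⁻¹.hb = -x.hb := rfl
@[simp] lemma inv_hc (x : Heis_s4) : x⁻¹.hc = x.ha * x.hb - x.hc := rfl

instance inst_s4_4 : Group Heis_s4 where
  mul_assoc x y z := by ext <;> simp <;> try ring
  one_mul x := by ext <;> simp
  mul_one x := by ext <;> simp
  inv_mul_cancel x := by ext <;> simp <;> try ring

lemma z_pow (c : ℤ) (n : ℕ) : (⟨0, 0, c⟩ : Heis_s4) ^ n = ⟨0, 0, n * c⟩ := by
  induction n with
  | zero => ext <;> simp
  | succ n ih => rw [pow_succ, ih]; ext <;> simp <;> try ring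

lemma z_not_finOrder {c : ℤ} (hc : c ≠ 0) : ¬ IsOfFinOrder (⟨0, 0, c⟩ : Heis_s4) := by
  rw [isOfFinOrder_iff_pow_eq_one]
  rintro ⟨n, hn, h⟩
  rw [z_pow] at h
  have := congrArg Heis_s4.hc h
  simp at this
  rcases this with h | h
  · omega
  · exact hc h

end Heis_s4

/-! ### Auxiliary: a homomorphism `ν(G) → Heis` from a character `G → ℤ` -/

section Phi

variable {K : Type*} [Group K] (f : K → ℤ) (hf : ∀ x y, f (x * y) = f x + f y)

/-- `g ↦ x^(f g)` in the Heisenberg group. -/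
def hX : K →* Heis_s4 where
  toFun g := ⟨f g, 0, 0⟩
  map_one' := by
    have h1 : f 1 = 0 := by have := hf 1 1; simpa using this
    ext <;> simp [h1]
  map_mul' x y := by ext <;> simp [hf]

/-- `g ↦ y^(f g)` in the Heisenberg group. -/
def hY : K →* Heis_s4 where
  toFun g := ⟨0, f g, 0⟩
  map_one' := by
    have h1 : f 1 = 0 := by have := hf 1 1; simpa using this
    ext <;> simp [h1]
  map_mul' x y := by ext <;> simp [hf]

include hf in
lemma f_one : f 1 = 0 := by have := hf 1 1; simpa using this

include hf in
lemma f_inv (x : K) : f x⁻¹ = -f x := by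
  have := hf x⁻¹ x; rw [inv_mul_cancel, f_one f hf] at this; omega

/-- The induced homomorphism on the free product. -/
def Phi0 : Coprod K K →* Heis_s4 := Coprod.lift (hX f hf) (hY f hf)

lemma Phi0_rels : ∀ r ∈ etaRels (conjActions K), Phi0 f hf r = 1 := by
  rintro r (⟨⟨g₁, g, h⟩, rfl⟩ | ⟨⟨h₁, g, h⟩, rfl⟩) <;>
  · simp only [commutatorElement_def, map_mul, map_inv, Phi0,
      Coprod.lift_apply_inl, Coprod.lift_apply_inr, conjActions, hX, hY,
      MonoidHom.coe_mk, OneHom.coe_mk]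
    ext <;> simp [hf, f_inv f hf] <;> try ring

/-- The induced homomorphism `ν(K) → Heis`. -/
def Phi : NuGroup K →* Heis_s4 :=
  QuotientGroup.lift _ (Phi0 f hf) (by
    have : Subgroup.normalClosure (etaRels (conjActions K)) ≤ (Phi0 f hf).ker :=
      Subgroup.normalClosure_le_normal fun x hx => Phi0_rels f hf x hx
    exact fun x hx => this hx)

lemma Phi_etaG (g : K) : Phi f hf (etaG (conjActions K) g) = ⟨f g, 0, 0⟩ := rfl

lemma Phi_etaH (g : K) : Phi f hf (etaH (conjActions K) g) = ⟨0, f g, 0⟩ := rfl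

lemma Phi_comm (g : K) :
    Phi f hf ⁅etaG (conjActions K) g, etaH (conjActions K) g⁆ = ⟨0, 0, f g * f g⟩ := by
  rw [commutatorElement_def, map_mul, map_mul, map_mul, map_inv, map_inv, Phi_etaG, Phi_etaH]
  ext <;> simp <;> try ring

end Phi

/-- If `G` is finitely generated, `G'` is locally finite and the diagonal subgroup
`Δ(G)` is periodic, then `G` is finite. -/
theorem finite_of_delta_periodic {G : Type*} [Group G] [Group.FG G]
    (h1 : IsLocallyFiniteGroup (commutator G))
    (h2 : ∀ x ∈ deltaSub G, IsOfFinOrder x) : Finite G := by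
  have hsurj : Function.Surjective (Abelianization.of (G := G)) :=
    fun b => QuotientGroup.mk_surjective b
  haveI hfgA : Group.FG (Abelianization G) := Group.fg_of_surjective hsurj
  -- Step 1: the abelianization of `G` is torsion.
  have htor : ∀ g : G, IsOfFinOrder (Abelianization.of g) := by
    intro g
    by_contra hna
    haveI : AddGroup.FG (Additive (Abelianization G)) := GroupFG.iff_add_fg.mp hfgA
    obtain ⟨n, ι, fι, p, hp, e, ⟨F⟩⟩ :=
      AddCommGroup.equiv_free_prod_directSum_zmod (Additive (Abelianization G))
    set a0 : Additive (Abelianization G) := Additive.ofMul (Abelianization.of g) with ha0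
    have hna' : ¬ IsOfFinAddOrder a0 := by rwa [isOfFinAddOrder_ofMul_iff]
    have hfst : (F a0).1 ≠ 0 := by
      intro h0
      apply hna'
      haveI : ∀ i, NeZero (p i ^ e i) := fun i => ⟨pow_ne_zero _ (hp i).ne_zero⟩
      haveI : Finite (DirectSum ι fun j => ZMod (p j ^ e j)) :=
        Finite.of_equiv _ DFinsupp.equivFunOnFintype.symm
      obtain ⟨m, hm, hms⟩ :=
        (isOfFinAddOrder_of_finite ((F a0).2)).exists_nsmul_eq_zero
      refine isOfFinAddOrder_iff_nsmul_eq_zero.mpr ⟨m, hm, ?_⟩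
      apply F.injective
      rw [map_nsmul, map_zero]
      have h1 : (m • F a0).1 = 0 := by
        rw [Prod.smul_fst, h0, smul_zero]
      have h2' : (m • F a0).2 = 0 := by
        rw [Prod.smul_snd]; exact hms
      exact Prod.ext h1 h2'
    obtain ⟨i, hi⟩ : ∃ i, (F a0).1 i ≠ 0 := by
      by_contra hc
      push_neg at hc
      exact hfst (Finsupp.ext hc)
    set χ : Additive (Abelianization G) →+ ℤ :=
      (Finsupp.applyAddHom i).comp ((AddMonoidHom.fst _ _).comp F.toAddMonoidHom) with hχ
    set f : G → ℤ := fun x => χ (Additive.ofMul (Abelianization.of x)) with hfdef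
    have hf : ∀ x y : G, f (x * y) = f x + f y := by
      intro x y
      simp [hfdef, map_mul]
    have hfg : f g ≠ 0 := by
      simpa [hfdef, hχ, ha0] using hi
    have hmem : ⁅etaG (conjActions G) g, etaH (conjActions G) g⁆ ∈ deltaSub G :=
      Subgroup.subset_closure ⟨g, rfl⟩
    have h3 := (Phi f hf).isOfFinOrder (h2 _ hmem)
    rw [Phi_comm f hf g] at h3
    exact Heis_s4.z_not_finOrder (mul_ne_zero hfg hfg) h3
  -- Step 2: the abelianization is finite.
  have hA : Finite (Abelianization G) := by
    apply CommGroup.finite_of_fg_torsion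
    intro a
    obtain ⟨g, rfl⟩ := hsurj a
    exact htor g
  haveI : Finite (G ⧸ commutator G) := hA
  haveI : (commutator G).FiniteIndex := Subgroup.finiteIndex_of_finite_quotient
  haveI : Group.FG (commutator G) := Subgroup.fg_of_index_ne_zero _
  -- Step 3: the commutator subgroup is finite by local finiteness.
  have hC : Finite (commutator G) := by
    have := h1 ⊤ (Group.fg_def.mp inferInstance)
    exact Finite.of_equiv _ Subgroup.topEquiv.toEquiv
  -- Step 4: conclude.
  exact Finite.of_equiv _ (Subgroup.groupEquivQuotientProdSubgroup (s := commutator G)).symm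
end

section
/- Let T be a finite abelian group and F a finitely generated free abelian group, and let G = T × F. Then the diagonal subgroup Δ(G) of ν(G) decomposes as Δ(T) × Δ(F) × (T ⊗_ℤ F); in particular, the torsion-free part of Δ(G) is Δ(F), and Δ(G) is locally finite if and only if F is trivial. -/
open Monoid
open scoped commutatorElement

variable {G H : Type*} [Group G] [Group H]

namespace DeltaProof

variable {K : Type*} [CommGroup K]

lemma conj_self (a b : K) : a⁻¹ * b * a = b := by
  rw [mul_comm a⁻¹ b, mul_assoc, inv_mul_cancel, mul_one]

local notation "ιg" => etaG (conjActions K)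
local notation "ιh" => etaH (conjActions K)

lemma conj_etaG (g₁ g h : K) :
    (ιg g₁)⁻¹ * ⁅ιg g, ιh h⁆ * ιg g₁ = ⁅ιg g, ιh h⁆ := by
  set μ : Coprod K K →* NuGroup K := QuotientGroup.mk' (Subgroup.normalClosure (etaRels (conjActions K)))
  have hm : (((Coprod.inl g₁ : Coprod K K))⁻¹ * ⁅(Coprod.inl g : Coprod K K), (Coprod.inr h : Coprod K K)⁆ * Coprod.inl g₁) *
      ⁅(Coprod.inl (g₁⁻¹ * g * g₁) : Coprod K K), (Coprod.inr ((conjActions K).aHG h g₁) : Coprod K K)⁆⁻¹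
      ∈ Subgroup.normalClosure (etaRels (conjActions K)) :=
    Subgroup.subset_normalClosure (Set.mem_union_left _ ⟨(g₁, g, h), rfl⟩)
  have h1 : μ ((((Coprod.inl g₁ : Coprod K K))⁻¹ * ⁅(Coprod.inl g : Coprod K K), (Coprod.inr h : Coprod K K)⁆ * Coprod.inl g₁) *
      ⁅(Coprod.inl (g₁⁻¹ * g * g₁) : Coprod K K), (Coprod.inr ((conjActions K).aHG h g₁) : Coprod K K)⁆⁻¹) = 1 :=
    (QuotientGroup.eq_one_iff _).2 hm
  rw [map_mul, map_inv, mul_inv_eq_one] at h1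
  have h2 : (conjActions K).aHG h g₁ = g₁⁻¹ * h * g₁ := rfl
  rw [h2, conj_self, conj_self] at h1
  exact h1

lemma conj_etaH (h₁ g h : K) :
    (ιh h₁)⁻¹ * ⁅ιg g, ιh h⁆ * ιh h₁ = ⁅ιg g, ιh h⁆ := by
  set μ : Coprod K K →* NuGroup K := QuotientGroup.mk' (Subgroup.normalClosure (etaRels (conjActions K)))
  have hm : (((Coprod.inr h₁ : Coprod K K))⁻¹ * ⁅(Coprod.inl g : Coprod K K), (Coprod.inr h : Coprod K K)⁆ * Coprod.inr h₁) *
      ⁅(Coprod.inl ((conjActions K).aGH g h₁) : Coprod K K), (Coprod.inr (h₁⁻¹ * h * h₁) : Coprod K K)⁆⁻¹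
      ∈ Subgroup.normalClosure (etaRels (conjActions K)) :=
    Subgroup.subset_normalClosure (Set.mem_union_right _ ⟨(h₁, g, h), rfl⟩)
  have h1 : μ ((((Coprod.inr h₁ : Coprod K K))⁻¹ * ⁅(Coprod.inl g : Coprod K K), (Coprod.inr h : Coprod K K)⁆ * Coprod.inr h₁) *
      ⁅(Coprod.inl ((conjActions K).aGH g h₁) : Coprod K K), (Coprod.inr (h₁⁻¹ * h * h₁) : Coprod K K)⁆⁻¹) = 1 :=
    (QuotientGroup.eq_one_iff _).2 hm
  rw [map_mul, map_inv, mul_inv_eq_one] at h1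
  have h2 : (conjActions K).aGH g h₁ = h₁⁻¹ * g * h₁ := rfl
  rw [h2, conj_self, conj_self] at h1
  exact h1

lemma comm_central (g h : K) (x : NuGroup K) : Commute x ⁅ιg g, ιh h⁆ := by
  have htop : (etaG (conjActions K)).range ⊔ (etaH (conjActions K)).range = ⊤ := by
    rw [etaG, etaH]
    change ((QuotientGroup.mk' (Subgroup.normalClosure (etaRels (conjActions K)))).comp Coprod.inl).range ⊔
      ((QuotientGroup.mk' (Subgroup.normalClosure (etaRels (conjActions K)))).comp Coprod.inr).range =
      (⊤ : Subgroup (Coprod K K ⧸ Subgroup.normalClosure (etaRels (conjActions K))))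
    rw [MonoidHom.range_comp, MonoidHom.range_comp, ← Subgroup.map_sup,
      Coprod.range_inl_sup_range_inr, ← MonoidHom.range_eq_map,
      MonoidHom.range_eq_top]
    exact QuotientGroup.mk'_surjective _
  have hx : x ∈ Subgroup.centralizer {⁅ιg g, ιh h⁆} := by
    have hle : (etaG (conjActions K)).range ⊔ (etaH (conjActions K)).range ≤
        Subgroup.centralizer {⁅ιg g, ιh h⁆} := by
      apply sup_le
      · rintro _ ⟨g₁, rfl⟩
        rw [Subgroup.mem_centralizer_iff]
        rintro _ rfl
        have := conj_etaG g₁ g h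
        calc ⁅ιg g, ιh h⁆ * ιg g₁ = ιg g₁ * ((ιg g₁)⁻¹ * ⁅ιg g, ιh h⁆ * ιg g₁) := by group
        _ = ιg g₁ * ⁅ιg g, ιh h⁆ := by rw [this]
      · rintro _ ⟨h₁, rfl⟩
        rw [Subgroup.mem_centralizer_iff]
        rintro _ rfl
        have := conj_etaH h₁ g h
        calc ⁅ιg g, ιh h⁆ * ιh h₁ = ιh h₁ * ((ιh h₁)⁻¹ * ⁅ιg g, ιh h⁆ * ιh h₁) := by group
        _ = ιh h₁ * ⁅ιg g, ιh h⁆ := by rw [this]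
    exact hle (htop ▸ Subgroup.mem_top x)
  exact (Subgroup.mem_centralizer_iff.1 hx _ rfl).symm

lemma comm_mul_left (g g' h : K) :
    ⁅ιg (g * g'), ιh h⁆ = ⁅ιg g, ιh h⁆ * ⁅ιg g', ιh h⁆ := by
  have key : ⁅ιg g * ιg g', ιh h⁆ = ιg g * ⁅ιg g', ιh h⁆ * (ιg g)⁻¹ * ⁅ιg g, ιh h⁆ := by
    group
  rw [map_mul, key]
  have hc := (comm_central g' h (ιg g)).eq
  have : ιg g * ⁅ιg g', ιh h⁆ * (ιg g)⁻¹ = ⁅ιg g', ιh h⁆ := by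
    rw [hc]; group
  rw [this]
  exact (comm_central g h _).eq

lemma comm_mul_right (g h h' : K) :
    ⁅ιg g, ιh (h * h')⁆ = ⁅ιg g, ιh h⁆ * ⁅ιg g, ιh h'⁆ := by
  have key : ⁅ιg g, ιh h * ιh h'⁆ = ⁅ιg g, ιh h⁆ * (ιh h * ⁅ιg g, ιh h'⁆ * (ιh h)⁻¹) := by
    group
  rw [map_mul, key]
  have hc := (comm_central g h' (ιh h)).eq
  have : ιh h * ⁅ιg g, ιh h'⁆ * (ιh h)⁻¹ = ⁅ιg g, ιh h'⁆ := by
    rw [hc]; group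
  rw [this]


end DeltaProof

namespace DeltaProof

/-- The "Heisenberg" model of `ν(K)` for abelian `K`. -/
@[ext] structure Heis (K : Type*) [CommGroup K] where
  g : K
  h : K
  t : TensorProduct ℤ (Additive K) (Additive K)

namespace Heis

variable {K : Type*} [CommGroup K]

noncomputable instance : Mul (Heis K) :=
  ⟨fun a b => ⟨a.g * b.g, a.h * b.h,
    a.t + b.t + (Additive.ofMul b.g) ⊗ₜ[ℤ] (Additive.ofMul a.h)⟩⟩

noncomputable instance : One (Heis K) := ⟨⟨1, 1, 0⟩⟩

noncomputable instance : Inv (Heis K) :=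
  ⟨fun a => ⟨a.g⁻¹, a.h⁻¹, -a.t + (Additive.ofMul a.g) ⊗ₜ[ℤ] (Additive.ofMul a.h)⟩⟩

@[simp] lemma mul_g (a b : Heis K) : (a * b).g = a.g * b.g := rfl
@[simp] lemma mul_h (a b : Heis K) : (a * b).h = a.h * b.h := rfl
@[simp] lemma mul_t (a b : Heis K) :
    (a * b).t = a.t + b.t + (Additive.ofMul b.g) ⊗ₜ[ℤ] (Additive.ofMul a.h) := rfl
@[simp] lemma one_g : (1 : Heis K).g = 1 := rfl
@[simp] lemma one_h : (1 : Heis K).h = 1 := rfl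
@[simp] lemma one_t : (1 : Heis K).t = 0 := rfl
@[simp] lemma inv_g (a : Heis K) : a⁻¹.g = a.g⁻¹ := rfl
@[simp] lemma inv_h (a : Heis K) : a⁻¹.h = a.h⁻¹ := rfl
@[simp] lemma inv_t (a : Heis K) :
    a⁻¹.t = -a.t + (Additive.ofMul a.g) ⊗ₜ[ℤ] (Additive.ofMul a.h) := rfl

noncomputable instance : Group (Heis K) where
  mul_assoc a b c := by
    ext
    · simp [mul_assoc]
    · simp [mul_assoc]
    · simp only [mul_t, mul_g, mul_h, ofMul_mul, TensorProduct.add_tmul,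
        TensorProduct.tmul_add]
      abel
  one_mul a := by ext <;> simp
  mul_one a := by ext <;> simp
  inv_mul_cancel a := by
    ext
    · simp
    · simp
    · simp only [mul_t, inv_t, inv_g, inv_h, one_t, ofMul_inv, TensorProduct.tmul_neg]
      abel

/-- First canonical injection. -/
noncomputable def inl : K →* Heis K where
  toFun g := ⟨g, 1, 0⟩
  map_one' := rfl
  map_mul' a b := by ext <;> simp

/-- Second canonical injection. -/
noncomputable def inr : K →* Heis K where
  toFun h := ⟨1, h, 0⟩
  map_one' := rfl
  map_mul' a b := by ext <;> simp

@[simp] lemma inl_g (g : K) : (inl g).g = g := rfl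
@[simp] lemma inl_h (g : K) : (inl g).h = 1 := rfl
@[simp] lemma inl_t (g : K) : (inl g).t = 0 := rfl
@[simp] lemma inr_g (h : K) : (inr h).g = 1 := rfl
@[simp] lemma inr_h (h : K) : (inr h).h = h := rfl
@[simp] lemma inr_t (h : K) : (inr h).t = 0 := rfl

lemma comm_inl_inr (g h : K) :
    ⁅inl g, inr h⁆ = (⟨1, 1, -((Additive.ofMul g) ⊗ₜ[ℤ] (Additive.ofMul h))⟩ : Heis K) := by
  rw [commutatorElement_def]
  ext
  · simp
  · simp
  · simp only [mul_t, inv_t, inv_g, inv_h, inl_t, inr_t, inl_g, inl_h, inr_g, inr_h,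
      mul_g, mul_h, one_mul, mul_one, ofMul_one, ofMul_inv,
      TensorProduct.neg_tmul, TensorProduct.tmul_neg,
      TensorProduct.zero_tmul, TensorProduct.tmul_zero]
    abel

lemma central (u : TensorProduct ℤ (Additive K) (Additive K)) (x : Heis K) :
    (⟨1, 1, u⟩ : Heis K) * x = x * ⟨1, 1, u⟩ := by
  ext
  · simp [mul_comm]
  · simp [mul_comm]
  · show u + x.t + _ ⊗ₜ[ℤ] Additive.ofMul (1:K) = x.t + u + Additive.ofMul (1:K) ⊗ₜ[ℤ] _
    simp
    exact add_comm u x.t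

end Heis

variable {K : Type*} [CommGroup K]

local notation "ιg" => etaG (conjActions K)
local notation "ιh" => etaH (conjActions K)

/-- The classifying homomorphism `ν(K) → Heis K`. -/
noncomputable def nuToHeis : NuGroup K →* Heis K := by
  refine QuotientGroup.lift _ (Coprod.lift Heis.inl Heis.inr) ?_
  refine Subgroup.normalClosure_le_normal ?_
  rintro x (⟨⟨g₁, g, h⟩, rfl⟩ | ⟨⟨h₁, g, h⟩, rfl⟩)
  · simp only [SetLike.mem_coe, MonoidHom.mem_ker]
    have e2 : (conjActions K).aHG h g₁ = h := conj_self g₁ h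
    have e1 : g₁⁻¹ * g * g₁ = g := conj_self g₁ g
    rw [e2, e1]
    simp only [map_mul, map_inv, map_commutatorElement, Coprod.lift_apply_inl,
      Coprod.lift_apply_inr, Heis.comm_inl_inr]
    rw [mul_assoc (Heis.inl g₁)⁻¹ _ (Heis.inl g₁), Heis.central, ← mul_assoc,
      inv_mul_cancel, one_mul, mul_inv_cancel]
  · simp only [SetLike.mem_coe, MonoidHom.mem_ker]
    have e2 : (conjActions K).aGH g h₁ = g := conj_self h₁ g
    have e1 : h₁⁻¹ * h * h₁ = h := conj_self h₁ h
    rw [e2, e1]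
    simp only [map_mul, map_inv, map_commutatorElement, Coprod.lift_apply_inl,
      Coprod.lift_apply_inr, Heis.comm_inl_inr]
    rw [mul_assoc (Heis.inr h₁)⁻¹ _ (Heis.inr h₁), Heis.central, ← mul_assoc,
      inv_mul_cancel, one_mul, mul_inv_cancel]

lemma nuToHeis_etaG (g : K) : nuToHeis (ιg g) = Heis.inl g := rfl
lemma nuToHeis_etaH (h : K) : nuToHeis (ιh h) = Heis.inr h := rfl


lemma nuToHeis_comm (g h : K) :
    nuToHeis ⁅ιg g, ιh h⁆ =
      (⟨1, 1, -((Additive.ofMul g) ⊗ₜ[ℤ] (Additive.ofMul h))⟩ : Heis K) := by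
  rw [map_commutatorElement, nuToHeis_etaG, nuToHeis_etaH, Heis.comm_inl_inr]

/-- The diagonal part of the tensor square. -/
noncomputable def diagT (K : Type*) [CommGroup K] : AddSubgroup (TensorProduct ℤ (Additive K) (Additive K)) :=
  AddSubgroup.closure (Set.range fun k : K => (Additive.ofMul k) ⊗ₜ[ℤ] (Additive.ofMul k))

lemma mem_props {x : NuGroup K} (hx : x ∈ deltaSub K) :
    (nuToHeis x).g = 1 ∧ (nuToHeis x).h = 1 ∧ (nuToHeis x).t ∈ diagT K := by
  induction hx using Subgroup.closure_induction with
  | mem y hy =>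
    obtain ⟨k, rfl⟩ := hy
    rw [nuToHeis_comm]
    exact ⟨rfl, rfl, neg_mem (AddSubgroup.subset_closure ⟨k, rfl⟩)⟩
  | one => exact ⟨by simp, by simp, by simpa using zero_mem (diagT K)⟩
  | mul y z hy hz ihy ihz =>
    refine ⟨by simp [ihy.1, ihz.1], by simp [ihy.2.1, ihz.2.1], ?_⟩
    rw [map_mul, Heis.mul_t, ihz.1]
    simpa using add_mem ihy.2.2 ihz.2.2
  | inv y hy ihy =>
    refine ⟨by simp [ihy.1], by simp [ihy.2.1], ?_⟩
    rw [map_inv, Heis.inv_t, ihy.1]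
    simpa using neg_mem ihy.2.2

/-- Forward homomorphism `Δ(K) → Multiplicative (diagT K)`. -/
noncomputable def fwd : ↥(deltaSub K) →* Multiplicative ↥(diagT K) where
  toFun x := Multiplicative.ofAdd ⟨-(nuToHeis (x : NuGroup K)).t, neg_mem (mem_props x.2).2.2⟩
  map_one' := by
    apply congrArg Multiplicative.ofAdd
    apply Subtype.ext
    simp
  map_mul' x y := by
    apply congrArg Multiplicative.ofAdd
    apply Subtype.ext
    show -(nuToHeis (((x * y : ↥(deltaSub K))) : NuGroup K)).t =
      -(nuToHeis (x : NuGroup K)).t + -(nuToHeis (y : NuGroup K)).t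
    rw [show (((x * y : ↥(deltaSub K))) : NuGroup K) = (x : NuGroup K) * (y : NuGroup K) from rfl,
      map_mul, Heis.mul_t, (mem_props y.2).1]
    simp
    abel

lemma comm_mem_center (g h : K) : ⁅ιg g, ιh h⁆ ∈ Subgroup.center (NuGroup K) :=
  Subgroup.mem_center_iff.2 fun x => (comm_central g h x).eq

open scoped IsMulCommutative

/-- `β₁ g : h ↦ [g, h^φ]` as an additive hom into the center. -/
noncomputable def beta1 (a : Additive K) :
    Additive K →+ Additive ↥(Subgroup.center (NuGroup K)) :=
  AddMonoidHom.mk'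
    (fun b => Additive.ofMul (⟨⁅ιg a.toMul, ιh b.toMul⁆, comm_mem_center _ _⟩ :
      Subgroup.center (NuGroup K)))
    (fun b b' => congrArg Additive.ofMul (Subtype.ext (comm_mul_right a.toMul b.toMul b'.toMul)))

/-- The commutator bracket as an additive bilinear map into the center. -/
noncomputable def beta :
    Additive K →+ (Additive K →ₗ[ℤ] Additive ↥(Subgroup.center (NuGroup K))) :=
  AddMonoidHom.mk' (fun a => (beta1 a).toIntLinearMap)
    (fun a a' => LinearMap.ext fun b =>
      congrArg Additive.ofMul (Subtype.ext (comm_mul_left a.toMul a'.toMul b.toMul)))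

/-- Induced map on the tensor square. -/
noncomputable def tau0 :
    TensorProduct ℤ (Additive K) (Additive K) →ₗ[ℤ] Additive ↥(Subgroup.center (NuGroup K)) :=
  TensorProduct.lift beta.toIntLinearMap

lemma tau0_tmul (g h : K) :
    tau0 ((Additive.ofMul g) ⊗ₜ[ℤ] (Additive.ofMul h)) =
      Additive.ofMul (⟨⁅ιg g, ιh h⁆, comm_mem_center _ _⟩ : Subgroup.center (NuGroup K)) := rfl

lemma tau0_mem {t : TensorProduct ℤ (Additive K) (Additive K)} (ht : t ∈ diagT K) :
    ((tau0 t).toMul : Subgroup.center (NuGroup K)).val ∈ deltaSub K := by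
  induction ht using AddSubgroup.closure_induction with
  | mem u hu =>
    obtain ⟨k, rfl⟩ := hu
    rw [tau0_tmul]
    exact Subgroup.subset_closure ⟨k, rfl⟩
  | zero => simpa using (deltaSub K).one_mem
  | add u v hu hv ihu ihv => simpa [map_add] using mul_mem ihu ihv
  | neg u hu ihu => simpa [map_neg] using inv_mem ihu

/-- Backward homomorphism. -/
noncomputable def bwd : Multiplicative ↥(diagT K) →* ↥(deltaSub K) :=
  MonoidHom.mk'
    (fun x => ⟨((tau0 (x.toAdd : diagT K).val).toMul : Subgroup.center (NuGroup K)).val,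
      tau0_mem (x.toAdd : diagT K).2⟩)
    (fun x y => Subtype.ext (by
      show ((tau0 ((x.toAdd : diagT K).val + (y.toAdd : diagT K).val)).toMul :
        Subgroup.center (NuGroup K)).val = _
      rw [map_add]
      rfl))

lemma bwd_fwd (x : ↥(deltaSub K)) : bwd (fwd x) = x := by
  obtain ⟨y, hy⟩ := x
  apply Subtype.ext
  show (bwd (fwd ⟨y, hy⟩) : NuGroup K) = y
  induction hy using Subgroup.closure_induction with
  | mem z hz =>
    obtain ⟨k, rfl⟩ := hz
    have h1 : fwd ⟨⁅ιg k, ιh k⁆, Subgroup.subset_closure ⟨k, rfl⟩⟩ =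
        Multiplicative.ofAdd ⟨(Additive.ofMul k) ⊗ₜ[ℤ] (Additive.ofMul k),
          AddSubgroup.subset_closure ⟨k, rfl⟩⟩ := by
      apply congrArg Multiplicative.ofAdd
      apply Subtype.ext
      show -(nuToHeis ⁅ιg k, ιh k⁆).t = _
      rw [nuToHeis_comm]
      simp
    rw [h1]
    show ((tau0 _).toMul : Subgroup.center (NuGroup K)).val = _
    simp only [toAdd_ofAdd]
    rw [tau0_tmul, toMul_ofMul]
  | one =>
    rw [show (⟨(1 : NuGroup K), (deltaSub K).one_mem⟩ : ↥(deltaSub K)) = 1 from rfl,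
      map_one, map_one]
    rfl
  | mul a b ha hb iha ihb =>
    rw [show (⟨a * b, mul_mem ha hb⟩ : ↥(deltaSub K)) = ⟨a, ha⟩ * ⟨b, hb⟩ from rfl,
      map_mul, map_mul]
    show (bwd (fwd ⟨a, ha⟩) : NuGroup K) * (bwd (fwd ⟨b, hb⟩) : NuGroup K) = a * b
    rw [iha, ihb]
  | inv a ha iha =>
    rw [show (⟨a⁻¹, inv_mem ha⟩ : ↥(deltaSub K)) = (⟨a, ha⟩ : ↥(deltaSub K))⁻¹ from rfl,
      map_inv, map_inv]
    show ((bwd (fwd ⟨a, ha⟩) : ↥(deltaSub K)) : NuGroup K)⁻¹ = a⁻¹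
    rw [iha]

lemma fwd_bwd (x : Multiplicative ↥(diagT K)) : fwd (bwd x) = x := by
  have key : ∀ (u) (hu : u ∈ diagT K),
      fwd (bwd (Multiplicative.ofAdd ⟨u, hu⟩)) = Multiplicative.ofAdd ⟨u, hu⟩ := by
    intro u hu
    induction hu using AddSubgroup.closure_induction with
    | mem v hv =>
      obtain ⟨k, rfl⟩ := hv
      have h1 : bwd (Multiplicative.ofAdd ⟨(Additive.ofMul k) ⊗ₜ[ℤ] (Additive.ofMul k),
          AddSubgroup.subset_closure ⟨k, rfl⟩⟩) =
          ⟨⁅ιg k, ιh k⁆, Subgroup.subset_closure ⟨k, rfl⟩⟩ := by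
        apply Subtype.ext
        show ((tau0 _).toMul : Subgroup.center (NuGroup K)).val = _
        simp only [toAdd_ofAdd]
        rw [tau0_tmul, toMul_ofMul]
      rw [h1]
      apply congrArg Multiplicative.ofAdd
      apply Subtype.ext
      show -(nuToHeis ⁅ιg k, ιh k⁆).t = _
      rw [nuToHeis_comm]
      simp
    | zero =>
      rw [show Multiplicative.ofAdd (⟨(0 : TensorProduct ℤ (Additive K) (Additive K)),
        zero_mem _⟩ : ↥(diagT K)) = 1 from rfl, map_one, map_one]
    | add a b ha hb iha ihb =>
      rw [show Multiplicative.ofAdd (⟨a + b, add_mem ha hb⟩ : ↥(diagT K)) =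
        Multiplicative.ofAdd ⟨a, ha⟩ * Multiplicative.ofAdd ⟨b, hb⟩ from rfl,
        map_mul, map_mul, iha, ihb]
    | neg a ha iha =>
      rw [show Multiplicative.ofAdd (⟨-a, neg_mem ha⟩ : ↥(diagT K)) =
        (Multiplicative.ofAdd ⟨a, ha⟩)⁻¹ from rfl, map_inv, map_inv, iha]
  exact key ((Multiplicative.toAdd x) : ↥(diagT K)).val ((Multiplicative.toAdd x) : ↥(diagT K)).2

/-- The key identification `Δ(K) ≅ Multiplicative (diagT K)` for an abelian group `K`. -/
noncomputable def deltaEquiv (K : Type*) [CommGroup K] :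
    ↥(deltaSub K) ≃* Multiplicative ↥(diagT K) :=
  { toFun := fwd, invFun := bwd, left_inv := bwd_fwd, right_inv := fwd_bwd,
    map_mul' := fwd.map_mul }


section Product

variable (T F : Type*) [CommGroup T] [CommGroup F]

/-- `Additive (T × F) ≃+ Additive T × Additive F`. -/
def prodAdd : Additive (T × F) ≃+ Additive T × Additive F where
  toFun x := (Additive.ofMul x.toMul.1, Additive.ofMul x.toMul.2)
  invFun p := Additive.ofMul (p.1.toMul, p.2.toMul)
  left_inv _ := rfl
  right_inv _ := rfl
  map_add' _ _ := rfl

/-- Reshuffling of a double product. -/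
def reshuffle (A B C D : Type*) [AddCommGroup A] [AddCommGroup B] [AddCommGroup C]
    [AddCommGroup D] [Module ℤ A] [Module ℤ B] [Module ℤ C] [Module ℤ D] :
    ((A × B) × (C × D)) ≃ₗ[ℤ] A × ((B × C) × D) where
  toFun p := (p.1.1, ((p.1.2, p.2.1), p.2.2))
  invFun q := ((q.1, q.2.1.1), (q.2.1.2, q.2.2))
  left_inv _ := rfl
  right_inv _ := rfl
  map_add' _ _ := rfl
  map_smul' _ _ := rfl

/-- The four-fold decomposition of the tensor square of a product. -/
noncomputable def bigEquiv :
    TensorProduct ℤ (Additive (T × F)) (Additive (T × F)) ≃ₗ[ℤ]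
      (TensorProduct ℤ (Additive T) (Additive T)) ×
      (((TensorProduct ℤ (Additive T) (Additive F)) ×
        (TensorProduct ℤ (Additive F) (Additive T))) ×
      (TensorProduct ℤ (Additive F) (Additive F))) :=
  (TensorProduct.congr (prodAdd T F).toIntLinearEquiv (prodAdd T F).toIntLinearEquiv).trans <|
  (TensorProduct.prodLeft ℤ ℤ _ _ _).trans <|
  ((TensorProduct.prodRight ℤ ℤ _ _ _).prodCongr (TensorProduct.prodRight ℤ ℤ _ _ _)).trans
    (reshuffle _ _ _ _)

lemma bigEquiv_tmul (x x' : T) (y y' : F) :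
    bigEquiv T F ((Additive.ofMul (x, y)) ⊗ₜ[ℤ] (Additive.ofMul (x', y'))) =
      ((Additive.ofMul x) ⊗ₜ[ℤ] (Additive.ofMul x'),
        (((Additive.ofMul x) ⊗ₜ[ℤ] (Additive.ofMul y'),
          (Additive.ofMul y) ⊗ₜ[ℤ] (Additive.ofMul x')),
        (Additive.ofMul y) ⊗ₜ[ℤ] (Additive.ofMul y'))) := by
  rfl

/-- `u ↦ (u, comm u)`. -/
noncomputable def commMap :
    TensorProduct ℤ (Additive T) (Additive F) →+
      (TensorProduct ℤ (Additive T) (Additive F)) ×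
        (TensorProduct ℤ (Additive F) (Additive T)) :=
  (LinearMap.prod LinearMap.id (TensorProduct.comm ℤ _ _).toLinearMap).toAddMonoidHom

@[simp] lemma commMap_apply (u) : commMap T F u = (u, TensorProduct.comm ℤ _ _ u) := rfl

lemma commMap_injective : Function.Injective (commMap T F) := fun u v h => by
  simpa using congrArg Prod.fst h

/-- The antidiagonal copy of `T ⊗ F` inside `(T ⊗ F) × (F ⊗ T)`. -/
noncomputable def anti : AddSubgroup
    ((TensorProduct ℤ (Additive T) (Additive F)) ×
      (TensorProduct ℤ (Additive F) (Additive T))) :=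
  (commMap T F).range

/-- The target subgroup. -/
noncomputable def targetSub : AddSubgroup
    ((TensorProduct ℤ (Additive T) (Additive T)) ×
      (((TensorProduct ℤ (Additive T) (Additive F)) ×
        (TensorProduct ℤ (Additive F) (Additive T))) ×
      (TensorProduct ℤ (Additive F) (Additive F)))) :=
  (diagT T).prod ((anti T F).prod (diagT F))

lemma map_diagT_eq :
    (diagT (T × F)).map (bigEquiv T F).toLinearMap.toAddMonoidHom = targetSub T F := by
  apply le_antisymm
  · rw [diagT, AddMonoidHom.map_closure]
    apply AddSubgroup.closure_le _ |>.2
    rintro _ ⟨_, ⟨⟨x, y⟩, rfl⟩, rfl⟩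
    show (bigEquiv T F) ((Additive.ofMul (x, y)) ⊗ₜ[ℤ] (Additive.ofMul (x, y))) ∈ targetSub T F
    rw [bigEquiv_tmul]
    refine AddSubgroup.mem_prod.2 ⟨AddSubgroup.subset_closure ⟨x, rfl⟩,
      AddSubgroup.mem_prod.2 ⟨⟨(Additive.ofMul x) ⊗ₜ[ℤ] (Additive.ofMul y), ?_⟩,
        AddSubgroup.subset_closure ⟨y, rfl⟩⟩⟩
    simp [TensorProduct.comm_tmul]
  · set M := (diagT (T × F)).map (bigEquiv T F).toLinearMap.toAddMonoidHom with hM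
    have hgen : ∀ x : T, ∀ y : F,
        ((Additive.ofMul x) ⊗ₜ[ℤ] (Additive.ofMul x),
          (((Additive.ofMul x) ⊗ₜ[ℤ] (Additive.ofMul y),
            (Additive.ofMul y) ⊗ₜ[ℤ] (Additive.ofMul x)),
          (Additive.ofMul y) ⊗ₜ[ℤ] (Additive.ofMul y))) ∈ M := by
      intro x y
      exact ⟨(Additive.ofMul (x, y)) ⊗ₜ[ℤ] (Additive.ofMul (x, y)),
        AddSubgroup.subset_closure ⟨(x, y), rfl⟩, bigEquiv_tmul T F x x y y⟩
    have c1 : ∀ a ∈ diagT T, ((a, ((0, 0), 0)) :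
        _ × ((_ × _) × _)) ∈ M := by
      intro a ha
      induction ha using AddSubgroup.closure_induction with
      | mem v hv =>
        obtain ⟨x, rfl⟩ := hv
        simpa using hgen x 1
      | zero => exact zero_mem M
      | add a b _ _ iha ihb => simpa using add_mem iha ihb
      | neg a _ iha => simpa using neg_mem iha
    have c3 : ∀ b ∈ diagT F, (((0 : TensorProduct ℤ (Additive T) (Additive T)),
        ((0, 0), b)) : _ × ((_ × _) × _)) ∈ M := by
      intro b hb
      induction hb using AddSubgroup.closure_induction with
      | mem v hv =>
        obtain ⟨y, rfl⟩ := hv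
        simpa using hgen 1 y
      | zero => exact zero_mem M
      | add a b _ _ iha ihb => simpa using add_mem iha ihb
      | neg a _ iha => simpa using neg_mem iha
    have c2 : ∀ u : TensorProduct ℤ (Additive T) (Additive F),
        (((0 : TensorProduct ℤ (Additive T) (Additive T)),
          ((u, TensorProduct.comm ℤ _ _ u), 0)) : _ × ((_ × _) × _)) ∈ M := by
      intro u
      induction u using TensorProduct.induction_on with
      | zero => rw [map_zero]; exact zero_mem M
      | tmul a b =>
        have h1 := hgen a.toMul b.toMul
        have h2 := c1 _ (AddSubgroup.subset_closure ⟨a.toMul, rfl⟩)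
        have h3 := c3 _ (AddSubgroup.subset_closure ⟨b.toMul, rfl⟩)
        have := add_mem (add_mem h1 (neg_mem h2)) (neg_mem h3)
        simpa [TensorProduct.comm_tmul, add_assoc] using this
      | add u v ihu ihv =>
        have := add_mem ihu ihv
        simpa [map_add] using this
    rintro ⟨a, ⟨uv, b⟩⟩ hmem
    rw [targetSub] at hmem
    obtain ⟨ha, huv, hb⟩ := AddSubgroup.mem_prod.1 hmem
    obtain ⟨u, hu⟩ := huv
    have : (a, (uv, b)) = ((a, ((0,0),0)) : _ × ((_ × _) × _)) +
        (0, ((u, TensorProduct.comm ℤ _ _ u), 0)) + (0, ((0,0), b)) := by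
      simp only [commMap_apply] at hu
      rw [← hu]
      simp
    rw [this]
    exact add_mem (add_mem (c1 a ha) (c2 u)) (c3 b hb)

end Product


/-- `Multiplicative` of a product. -/
def multProd (A B : Type*) [AddZeroClass A] [AddZeroClass B] :
    Multiplicative (A × B) ≃* Multiplicative A × Multiplicative B where
  toFun x := (Multiplicative.ofAdd x.toAdd.1, Multiplicative.ofAdd x.toAdd.2)
  invFun p := Multiplicative.ofAdd (p.1.toAdd, p.2.toAdd)
  left_inv _ := rfl
  right_inv _ := rfl
  map_mul' _ _ := rfl

section Assemble

variable (T F : Type*) [CommGroup T] [CommGroup F]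

noncomputable def antiEquiv : TensorProduct ℤ (Additive T) (Additive F) ≃+ ↥(anti T F) :=
  AddMonoidHom.ofInjective (commMap_injective T F)

noncomputable def chainAdd : ↥(diagT (T × F)) ≃+
    (↥(diagT T) × (↥(anti T F) × ↥(diagT F))) :=
  ((diagT (T × F)).equivMapOfInjective (bigEquiv T F).toLinearMap.toAddMonoidHom
      (bigEquiv T F).injective).trans <|
  (AddEquiv.addSubgroupCongr (map_diagT_eq T F)).trans <|
  (AddSubgroup.prodEquiv _ _).trans <|
  AddEquiv.prodCongr (AddEquiv.refl _) (AddSubgroup.prodEquiv _ _)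

/-- The main isomorphism. -/
noncomputable def mainEquiv : ↥(deltaSub (T × F)) ≃*
    (↥(deltaSub T) × ↥(deltaSub F) ×
      Multiplicative (TensorProduct ℤ (Additive T) (Additive F))) :=
  (deltaEquiv (T × F)).trans <|
  (AddEquiv.toMultiplicative (chainAdd T F)).trans <|
  (multProd _ _).trans <|
  (MulEquiv.prodCongr ((deltaEquiv T).symm) ((multProd _ _).trans
    (MulEquiv.prodCongr (AddEquiv.toMultiplicative (antiEquiv T F).symm)
      ((deltaEquiv F).symm)))).trans <|
  MulEquiv.prodCongr (MulEquiv.refl _) (MulEquiv.prodComm)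

end Assemble

/-- A tensor product of a finite abelian group with a f.g. abelian group is finite. -/
lemma finite_tensor (A B : Type*) [AddCommGroup A] [AddCommGroup B] [Finite A]
    [Module.Finite ℤ B] : Finite (TensorProduct ℤ A B) := by
  haveI : Module.Finite ℤ A := Module.Finite.of_finite
  have hfg : AddGroup.FG (TensorProduct ℤ A B) := Module.Finite.iff_addGroup_fg.1 (Module.Finite.tensorProduct ℤ A B)
  have htor : AddMonoid.IsTorsion (TensorProduct ℤ A B) := by
    intro x
    rw [isOfFinAddOrder_iff_nsmul_eq_zero]
    refine ⟨Nat.card A, Nat.card_pos, ?_⟩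
    rw [← natCast_zsmul]
    induction x using TensorProduct.induction_on with
    | zero => simp
    | tmul a b =>
      rw [TensorProduct.smul_tmul']
      have : (Nat.card A : ℤ) • a = 0 := by
        rw [natCast_zsmul]
        exact card_nsmul_eq_zero'
      rw [this, TensorProduct.zero_tmul]
    | add a b iha ihb => rw [smul_add, iha, ihb, add_zero]
  exact AddCommGroup.finite_of_fg_torsion _ htor


section TorsionFree

variable {F : Type*} [CommGroup F] {n : ℕ}

/-- Concrete model of the tensor square of a f.g. free abelian group. -/
noncomputable def ffEquiv (e0 : Additive F ≃+ (Fin n → ℤ)) :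
    TensorProduct ℤ (Additive F) (Additive F) ≃ₗ[ℤ] (Fin n → Fin n → ℤ) :=
  (TensorProduct.congr e0.toIntLinearEquiv e0.toIntLinearEquiv).trans
    (TensorProduct.piScalarRight ℤ ℤ (Fin n → ℤ) (Fin n))

lemma ffEquiv_tmul (e0 : Additive F ≃+ (Fin n → ℤ)) (a b : Additive F) (j i : Fin n) :
    ffEquiv e0 (a ⊗ₜ[ℤ] b) j i = e0 b j * e0 a i := by
  change ((TensorProduct.congr e0.toIntLinearEquiv e0.toIntLinearEquiv).trans
    (TensorProduct.piScalarRight ℤ ℤ (Fin n → ℤ) (Fin n))) (a ⊗ₜ[ℤ] b) j i = _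
  simp [LinearEquiv.trans_apply, TensorProduct.congr_tmul]

lemma tmul_self_ne_zero (e0 : Additive F ≃+ (Fin n → ℤ)) {f : F} (hf : f ≠ 1) :
    (Additive.ofMul f) ⊗ₜ[ℤ] (Additive.ofMul f) ≠ 0 := by
  have hv : e0 (Additive.ofMul f) ≠ 0 := by
    intro h
    apply hf
    have := e0.injective (h.trans (map_zero e0).symm)
    simpa using congrArg Additive.toMul this
  obtain ⟨i, hi⟩ := Function.ne_iff.1 hv
  intro h
  have h2 := congrArg (fun z => ffEquiv e0 z i i) h
  simp only [map_zero, Pi.zero_apply, ffEquiv_tmul] at h2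
  exact mul_ne_zero hi hi h2

lemma delta_torsionfree (e0 : Additive F ≃+ (Fin n → ℤ)) :
    ∀ x : ↥(deltaSub F), x ≠ 1 → ¬ IsOfFinOrder x := by
  intro x hx hord
  set y := (deltaEquiv F) x with hy
  have hy1 : y ≠ 1 := fun h => hx ((deltaEquiv F).injective (h.trans (map_one _).symm))
  set u : TensorProduct ℤ (Additive F) (Additive F) :=
    ((Multiplicative.toAdd y : ↥(diagT F)) : TensorProduct ℤ (Additive F) (Additive F)) with hu
  have hu0 : u ≠ 0 := by
    intro h
    apply hy1
    have : (Multiplicative.toAdd y : ↥(diagT F)) = 0 := Subtype.ext h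
    have := congrArg Multiplicative.ofAdd this
    simpa using this
  obtain ⟨k, hk, hxk⟩ := isOfFinOrder_iff_pow_eq_one.1 hord
  have hyk : y ^ k = 1 := by rw [hy, ← map_pow, hxk, map_one]
  have hk1 : k • (Multiplicative.toAdd y : ↥(diagT F)) = 0 := by
    have := congrArg Multiplicative.toAdd hyk
    simp only [toAdd_pow, toAdd_one] at this
    exact this
  have hk2 : k • u = 0 := by
    rw [hu]
    have := congrArg (AddSubgroup.subtype (diagT F)) hk1
    rwa [map_nsmul, map_zero] at this
  have hw : ffEquiv e0 u ≠ 0 := by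
    intro h
    exact hu0 ((ffEquiv e0).map_eq_zero_iff.1 h)
  obtain ⟨j, hj⟩ := Function.ne_iff.1 hw
  obtain ⟨i, hi⟩ := Function.ne_iff.1 hj
  have h3 : k • ffEquiv e0 u = 0 := by rw [← map_nsmul, hk2, map_zero]
  have h4 : k • (ffEquiv e0 u j i) = 0 := by rw [← Pi.smul_apply, ← Pi.smul_apply, h3]; rfl
  rw [nsmul_eq_mul] at h4
  rcases mul_eq_zero.1 h4 with h4 | h4
  · have : k = 0 := by exact_mod_cast h4
    omega
  · exact hi h4

end TorsionFree

end DeltaProof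


/-- For `G = T × F` with `T` finite abelian and `F` finitely generated free abelian,
`Δ(G) ≅ Δ(T) × Δ(F) × (T ⊗_ℤ F)`; the factors `Δ(T)` and `T ⊗_ℤ F` are finite while
`Δ(F)` is torsion-free, and `Δ(G)` is locally finite iff `F` is trivial. -/
theorem delta_of_prod_decomposition {T F : Type*} [CommGroup T] [CommGroup F] [Finite T]
    (n : ℕ) (hF : Nonempty (F ≃* Multiplicative (Fin n → ℤ))) :
    Nonempty (deltaSub (T × F) ≃*
      (deltaSub T × deltaSub F ×
        Multiplicative (TensorProduct ℤ (Additive T) (Additive F)))) ∧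
    Finite (deltaSub T) ∧
    Finite (TensorProduct ℤ (Additive T) (Additive F)) ∧
    (∀ x : deltaSub F, x ≠ 1 → ¬ IsOfFinOrder x) ∧
    (IsLocallyFiniteGroup (deltaSub (T × F)) ↔ Subsingleton F) := by
  
  obtain ⟨eF⟩ := hF
  have e0 : Additive F ≃+ (Fin n → ℤ) := MulEquiv.toAdditiveLeft eF
  haveI : Module.Finite ℤ (Additive F) := Module.Finite.equiv e0.symm.toIntLinearEquiv
  haveI finTT : Finite (TensorProduct ℤ (Additive T) (Additive T)) := DeltaProof.finite_tensor _ _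
  haveI finTF : Finite (TensorProduct ℤ (Additive T) (Additive F)) := DeltaProof.finite_tensor _ _
  haveI : Finite (Multiplicative ↥(DeltaProof.diagT T)) := Finite.of_equiv _ Multiplicative.ofAdd
  have finDT : Finite ↥(deltaSub T) := Finite.of_equiv _ (DeltaProof.deltaEquiv T).symm.toEquiv
  have tf := DeltaProof.delta_torsionfree e0
  refine ⟨⟨DeltaProof.mainEquiv T F⟩, finDT, finTF, tf, ?_, ?_⟩
  · -- locally finite → F trivial
    intro hLF
    by_contra hns
    haveI : Nontrivial F := not_subsingleton_iff_nontrivial.1 hns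
    obtain ⟨f, hf⟩ := exists_ne (1 : F)
    have hmem : (Additive.ofMul f) ⊗ₜ[ℤ] (Additive.ofMul f) ∈ DeltaProof.diagT F :=
      AddSubgroup.subset_closure ⟨f, rfl⟩
    set x0 : ↥(deltaSub F) :=
      (DeltaProof.deltaEquiv F).symm (Multiplicative.ofAdd ⟨_, hmem⟩) with hx0def
    have hx0 : x0 ≠ 1 := by
      intro h
      have h1 : (Multiplicative.ofAdd (⟨_, hmem⟩ : ↥(DeltaProof.diagT F))) = 1 := by
        rw [← map_one (DeltaProof.deltaEquiv F), ← h, hx0def, MulEquiv.apply_symm_apply]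
      have h0 : (⟨(Additive.ofMul f) ⊗ₜ[ℤ] (Additive.ofMul f), hmem⟩ : ↥(DeltaProof.diagT F)) = 0 := by
        have := congrArg Multiplicative.toAdd h1
        simpa using this
      exact DeltaProof.tmul_self_ne_zero e0 hf (congrArg Subtype.val h0)
    have hinf : ¬ IsOfFinOrder x0 := tf x0 hx0
    set y : ↥(deltaSub (T × F)) := (DeltaProof.mainEquiv T F).symm (1, x0, 1) with hydef
    have hFG : Subgroup.FG (Subgroup.zpowers y) :=
      ⟨{y}, by rw [Finset.coe_singleton, Subgroup.zpowers_eq_closure]⟩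
    haveI hfin : Finite ↥(Subgroup.zpowers y) := hLF _ hFG
    have hyf : IsOfFinOrder y := finite_zpowers.1 (Set.finite_coe_iff.1 hfin)
    obtain ⟨k, hk, hky⟩ := isOfFinOrder_iff_pow_eq_one.1 hyf
    apply hinf
    rw [isOfFinOrder_iff_pow_eq_one]
    refine ⟨k, hk, ?_⟩
    have : ((DeltaProof.mainEquiv T F) y) ^ k = 1 := by rw [← map_pow, hky, map_one]
    rw [hydef, MulEquiv.apply_symm_apply] at this
    have := congrArg (fun p => p.2.1) this
    simpa using this
  · intro hsub
    haveI : Subsingleton (Additive F) := ‹Subsingleton F›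
    haveI : Finite ↥(DeltaProof.diagT F) := Subtype.finite
    haveI : Finite (Multiplicative ↥(DeltaProof.diagT F)) := Finite.of_equiv _ Multiplicative.ofAdd
    haveI finDF : Finite ↥(deltaSub F) := Finite.of_equiv _ (DeltaProof.deltaEquiv F).symm.toEquiv
    haveI : Finite (Multiplicative (TensorProduct ℤ (Additive T) (Additive F))) :=
      Finite.of_equiv _ Multiplicative.ofAdd
    haveI : Finite ↥(deltaSub (T × F)) := Finite.of_equiv _ (DeltaProof.mainEquiv T F).symm.toEquiv
    intro S _
    exact Subtype.finite
end
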